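/- arXiv:2001.02294 — 2 statements merged into one kernel-verified Lean document; each statement's English description precedes it below -/
import Mathlib

section
/- Let Q be a Markov kernel on E×E whose diagonal D is absorbing (Q(z,D) = 1 for all z ∈ D) and which is π×π-irreducible for a probability measure π on E, i.e. for every z ∈ E×E and every measurable A ⊆ E×E with (π×π)(A) > 0 there is n ≥ 1 with Q^n(z,A) > 0. For z ∈ E×E let ℙ_z be the law of the chain with kernel Q started at z and let τ_c be the hitting time of D. If there exist z₀ = (x₀,y₀) ∈ E×E and r₀ > 0 such that E_{z₀}[e^{r₀ τ_c}] < ∞, then E_{(x,y)}[e^{r₀ τ_c}] < ∞ for (π×π)-almost every pair (x,y) ∈ E×E. (Lemma 2.2 of the paper.) -/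
open MeasureTheory ProbabilityTheory Filter
open scoped ENNReal NNReal Topology

/-- `iterK Q n` is the `n`-step kernel `Q^n` (`n`-fold composition of `Q`). -/
noncomputable def iterK {S : Type*} [MeasurableSpace S] (Q : Kernel S S) : ℕ → Kernel S S
  | 0 => Kernel.id
  | n + 1 => Q ∘ₖ iterK Q n

/-- `surv Q D n z = ℙ_z[τ_c > n]`: the probability that the Markov chain with kernel `Q`
started at `z` avoids the set `D` at all times `0, 1, …, n`.  (This is the canonical
finite-dimensional expression of the event `{τ_c > n}` on path space, where
`τ_c = inf {n ≥ 0 : ω_n ∈ D}` is the hitting time of `D`.) -/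
noncomputable def surv {S : Type*} [MeasurableSpace S] (Q : Kernel S S) (D : Set S) :
    ℕ → S → ℝ≥0∞
  | 0 => Dᶜ.indicator 1
  | n + 1 => Dᶜ.indicator (fun z => ∫⁻ w, surv Q D n w ∂(Q z))

/-- `couplingMGF Q D r z = E_z[e^{r τ_c}]` where `τ_c` is the hitting time of `D` for the
chain with kernel `Q` started at `z` (with the convention `e^∞ = ∞`):
`E_z[e^{r τ_c}] = Σ_{n≥0} e^{rn} ℙ_z[τ_c = n] + ∞ · ℙ_z[τ_c = ∞]`. -/
noncomputable def couplingMGF {S : Type*} [MeasurableSpace S] (Q : Kernel S S) (D : Set S)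
    (r : ℝ) (z : S) : ℝ≥0∞ :=
  (1 - surv Q D 0 z)
    + ∑' n : ℕ, ENNReal.ofReal (Real.exp (r * (n + 1))) * (surv Q D n z - surv Q D (n + 1) z)
    + ⊤ * ⨅ n, surv Q D n z

section Aux

variable {S : Type*} [MeasurableSpace S] (Q : Kernel S S) (D : Set S)

lemma surv_le_one [IsMarkovKernel Q] : ∀ n z, surv Q D n z ≤ 1 := by
  intro n
  induction n with
  | zero =>
    intro z
    by_cases hz : z ∈ Dᶜ
    · simp [surv, Set.indicator_of_mem hz]
    · simp [surv, Set.indicator_of_notMem hz]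
  | succ n ih =>
    intro z
    by_cases hz : z ∈ Dᶜ
    · simp only [surv, Set.indicator_of_mem hz]
      calc ∫⁻ w, surv Q D n w ∂(Q z) ≤ ∫⁻ _, 1 ∂(Q z) := lintegral_mono ih
        _ = 1 := by simp
    · simp [surv, Set.indicator_of_notMem hz]

lemma surv_succ_le [IsMarkovKernel Q] : ∀ n z, surv Q D (n + 1) z ≤ surv Q D n z := by
  intro n
  induction n with
  | zero =>
    intro z
    by_cases hz : z ∈ Dᶜ
    · have h0 : surv Q D 0 z = 1 := by simp [surv, Set.indicator_of_mem hz]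
      rw [h0]
      exact surv_le_one Q D 1 z
    · simp [surv, Set.indicator_of_notMem hz]
  | succ n ih =>
    intro z
    by_cases hz : z ∈ Dᶜ
    · simp only [surv, Set.indicator_of_mem hz]
      exact lintegral_mono ih
    · simp [surv, Set.indicator_of_notMem hz]

lemma surv_anti [IsMarkovKernel Q] (z : S) : Antitone fun n => surv Q D n z :=
  antitone_nat_of_succ_le fun n => surv_succ_le Q D n z

lemma surv_zero_of_mem {z : S} (hz : z ∈ D) : ∀ n, surv Q D n z = 0 := by
  intro n
  have hz' : z ∉ Dᶜ := by simpa using hz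
  cases n with
  | zero => simp [surv, Set.indicator_of_notMem hz']
  | succ n => simp [surv, Set.indicator_of_notMem hz']

lemma mgf_eq_one_of_mem {z : S} (hz : z ∈ D) (r : ℝ) : couplingMGF Q D r z = 1 := by
  simp [couplingMGF, surv_zero_of_mem Q D hz]

lemma measurable_surv (hDm : MeasurableSet D) [IsSFiniteKernel Q] :
    ∀ n, Measurable (surv Q D n) := by
  intro n
  induction n with
  | zero => exact measurable_one.indicator hDm.compl
  | succ n ih =>
    exact (Measurable.lintegral_kernel_prod_right
      (f := fun _ w => surv Q D n w) (ih.comp measurable_snd)).indicator hDm.compl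

lemma measurable_mgf (hDm : MeasurableSet D) [IsSFiniteKernel Q] (r : ℝ) :
    Measurable (couplingMGF Q D r) := by
  have hs := measurable_surv Q D hDm
  refine Measurable.add (Measurable.add ?_ ?_) ?_
  · exact (hs 0).const_sub 1
  · exact Measurable.ennreal_tsum fun n => ((hs n).sub (hs (n + 1))).const_mul _
  · exact (Measurable.iInf fun n => hs n).const_mul ⊤

lemma lintegral_mgf_le (hDm : MeasurableSet D) [IsMarkovKernel Q]
    (habs : ∀ z ∈ D, Q z D = 1) {r : ℝ} (hr : 0 ≤ r) (z : S) :
    ∫⁻ w, couplingMGF Q D r w ∂(Q z) ≤ couplingMGF Q D r z := by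
  set c : ℕ → ℝ≥0∞ := fun n => ENNReal.ofReal (Real.exp (r * (n + 1))) with hc
  have hs := measurable_surv Q D hDm
  by_cases hz : z ∈ D
  · -- on D the function equals 1 and D is absorbing
    have hcompl : Q z Dᶜ = 0 := by
      have := habs z hz
      rw [measure_compl hDm (measure_ne_top _ _), this, measure_univ, tsub_self]
    have hae : ∀ᵐ w ∂(Q z), couplingMGF Q D r w = 1 := by
      filter_upwards [mem_ae_iff.mpr (by simpa using hcompl)] with w hw
      exact mgf_eq_one_of_mem Q D hw r
    rw [lintegral_congr_ae hae, lintegral_one, measure_univ, mgf_eq_one_of_mem Q D hz r]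
  · have hz' : z ∈ Dᶜ := hz
    have hfin : ∀ n, ∫⁻ w, surv Q D n w ∂(Q z) ≠ ⊤ := by
      intro n
      have hle : ∫⁻ w, surv Q D n w ∂(Q z) ≤ 1 := by
        calc ∫⁻ w, surv Q D n w ∂(Q z) ≤ ∫⁻ _, 1 ∂(Q z) := lintegral_mono (surv_le_one Q D n)
          _ = 1 := by simp
      exact (hle.trans_lt ENNReal.one_lt_top).ne
    have hsucc : ∀ n, surv Q D (n + 1) z = ∫⁻ w, surv Q D n w ∂(Q z) := fun n => by
      simp [surv, Set.indicator_of_mem hz']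
    have hs0 : surv Q D 0 z = 1 := by simp [surv, Set.indicator_of_mem hz']
    -- split the integral into the three summands
    have hA : ∫⁻ w, (1 - surv Q D 0 w) ∂(Q z) = surv Q D 0 z - surv Q D 1 z := by
      rw [lintegral_sub (hs 0) (hfin 0) (ae_of_all _ (surv_le_one Q D 0)), lintegral_one,
        measure_univ, hsucc 0, hs0]
    have hB : ∫⁻ w, (∑' n : ℕ, c n * (surv Q D n w - surv Q D (n + 1) w)) ∂(Q z)
        = ∑' n : ℕ, c n * (surv Q D (n + 1) z - surv Q D (n + 2) z) := by
      rw [lintegral_tsum (f := fun n w => c n * (surv Q D n w - surv Q D (n + 1) w)) fun n =>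
        (((hs n).sub (hs (n + 1))).const_mul _).aemeasurable]
      refine tsum_congr fun n => ?_
      rw [lintegral_const_mul (f := fun w => surv Q D n w - surv Q D (n + 1) w) _ ((hs n).sub (hs (n + 1))),
        lintegral_sub (hs (n + 1)) (hfin (n + 1))
          (ae_of_all _ fun w => surv_succ_le Q D n w), hsucc n, hsucc (n + 1)]
    have hC : ∫⁻ w, (⊤ * ⨅ n, surv Q D n w) ∂(Q z) = ⊤ * ⨅ n, surv Q D (n + 1) z := by
      rw [lintegral_const_mul _ (Measurable.iInf fun n => hs n),
        lintegral_iInf hs (fun m n hmn => fun w => surv_anti Q D w hmn) (hfin 0)]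
      congr 1
      exact iInf_congr fun n => (hsucc n).symm
    have hmono : ∀ n : ℕ, c n ≤ c (n + 1) := by
      intro n
      apply ENNReal.ofReal_le_ofReal
      apply Real.exp_le_exp.mpr
      have : ((n : ℝ) + 1) ≤ ((n : ℕ) + 1 : ℕ) + 1 := by push_cast; linarith
      nlinarith [hr]
    have h1c : (1 : ℝ≥0∞) ≤ c 0 := by
      rw [hc]
      simp only [Nat.cast_zero, zero_add, mul_one]
      exact ENNReal.one_le_ofReal.mpr (Real.one_le_exp hr)
    calc ∫⁻ w, couplingMGF Q D r w ∂(Q z)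
        = (surv Q D 0 z - surv Q D 1 z)
          + (∑' n : ℕ, c n * (surv Q D (n + 1) z - surv Q D (n + 2) z))
          + ⊤ * ⨅ n, surv Q D (n + 1) z := by
          simp only [couplingMGF]
          rw [lintegral_add_right _ ((Measurable.iInf fun n => hs n).const_mul ⊤),
            lintegral_add_left ((hs 0).const_sub 1), hA, hB, hC]
      _ ≤ c 0 * (surv Q D 0 z - surv Q D 1 z)
          + (∑' n : ℕ, c (n + 1) * (surv Q D (n + 1) z - surv Q D (n + 2) z))
          + ⊤ * ⨅ n, surv Q D n z := by
          gcongr with n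
          · exact le_mul_of_one_le_left zero_le h1c
          · exact hmono n
          · exact surv_succ_le Q D _ z
      _ = (1 - surv Q D 0 z)
          + (∑' n : ℕ, c n * (surv Q D n z - surv Q D (n + 1) z))
          + ⊤ * ⨅ n, surv Q D n z := by
          rw [tsum_eq_zero_add' ENNReal.summable (f := fun n =>
            c n * (surv Q D n z - surv Q D (n + 1) z)), hs0, tsub_self, zero_add]
      _ = couplingMGF Q D r z := rfl

lemma lintegral_iter_mgf_le (hDm : MeasurableSet D) [IsMarkovKernel Q]
    (habs : ∀ z ∈ D, Q z D = 1) {r : ℝ} (hr : 0 ≤ r) :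
    ∀ n z, ∫⁻ w, couplingMGF Q D r w ∂((iterK Q n) z) ≤ couplingMGF Q D r z := by
  intro n
  induction n with
  | zero =>
    intro z
    simp only [iterK, Kernel.id_apply]
    rw [lintegral_dirac' _ (measurable_mgf Q D hDm r)]
  | succ n ih =>
    intro z
    calc ∫⁻ w, couplingMGF Q D r w ∂((Q ∘ₖ iterK Q n) z)
        = ∫⁻ b, ∫⁻ w, couplingMGF Q D r w ∂(Q b) ∂((iterK Q n) z) :=
          Kernel.lintegral_comp Q (iterK Q n) z (measurable_mgf Q D hDm r)
      _ ≤ ∫⁻ b, couplingMGF Q D r b ∂((iterK Q n) z) :=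
          lintegral_mono fun b => lintegral_mgf_le Q D hDm habs hr b
      _ ≤ couplingMGF Q D r z := ih z

end Aux

/-- **Lemma 2.2**: let `Q` be a Markov kernel on `E × E` whose diagonal `D` is absorbing and
which is `π×π`-irreducible.  If `E_{z₀}[e^{r₀ τ_c}] < ∞` for some initial pair `z₀` and some
`r₀ > 0`, then `E_{(x,y)}[e^{r₀ τ_c}] < ∞` for `π×π`-almost every pair `(x,y)`. -/
theorem finite_exp_coupling_time_ae {E : Type*} [MeasurableSpace E]
    (π : Measure E) [IsProbabilityMeasure π]
    (Q : Kernel (E × E) (E × E)) [IsMarkovKernel Q]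
    (D : Set (E × E)) (hD : D = {p : E × E | p.1 = p.2}) (hDmeas : MeasurableSet D)
    (habs : ∀ z ∈ D, Q z D = 1)
    (hirr : ∀ z : E × E, ∀ A : Set (E × E), MeasurableSet A → 0 < (π.prod π) A →
      ∃ n : ℕ, 1 ≤ n ∧ 0 < (iterK Q n) z A)
    (z₀ : E × E) (r₀ : ℝ) (hr₀ : 0 < r₀)
    (hfin : couplingMGF Q D r₀ z₀ < ⊤) :
    ∀ᵐ p ∂(π.prod π), couplingMGF Q D r₀ p < ⊤ := by
  set B : Set (E × E) := {p | couplingMGF Q D r₀ p = ⊤} with hB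
  have hBm : MeasurableSet B := measurable_mgf Q D hDmeas r₀ (measurableSet_singleton ⊤)
  rw [ae_iff]
  have hset : {p : E × E | ¬ couplingMGF Q D r₀ p < ⊤} = B := by
    ext p; simp [hB, lt_top_iff_ne_top]
  rw [hset]
  by_contra hpos
  obtain ⟨n, -, hn⟩ := hirr z₀ B hBm (pos_iff_ne_zero.mpr hpos)
  have htop : ∫⁻ w, couplingMGF Q D r₀ w ∂((iterK Q n) z₀) = ⊤ := by
    refine eq_top_iff.mpr ?_
    calc (⊤ : ℝ≥0∞) = ⊤ * (iterK Q n) z₀ B := (ENNReal.top_mul hn.ne').symm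
      _ = ∫⁻ _ in B, ⊤ ∂((iterK Q n) z₀) := (setLIntegral_const B ⊤).symm
      _ = ∫⁻ w in B, couplingMGF Q D r₀ w ∂((iterK Q n) z₀) := by
          refine setLIntegral_congr_fun hBm (fun w hw => ?_) |>.symm
          exact hw
      _ ≤ ∫⁻ w, couplingMGF Q D r₀ w ∂((iterK Q n) z₀) := setLIntegral_le_lintegral _ _
  have := lintegral_iter_mgf_le Q D hDmeas habs hr₀.le n z₀
  rw [htop] at this
  exact absurd (top_le_iff.mp this) hfin.ne
end

section
/- Let P be a Markov kernel on E that is ergodic with invariant probability measure π and non-atomic, and let Q be a Markov coupling of P with absorbing diagonal that has independent components with some parameter β ∈ (0,1). Let τ_c be the hitting time of the diagonal D for the chain with kernel Q. Suppose there exist x₀ ∈ E and r > 0 such that limsup_{n→∞} (1/n)·log ℙ_{δ_{x₀}⊗π}[τ_c > n] ≤ −r. Then for every ε ∈ (0,r) and for π-almost every x ∈ E, the chain is geometrically ergodic with rate r − ε: limsup_{n→∞} (1/n)·log ‖δ_x P^n − π‖_TV ≤ −(r − ε). (Proposition 2.6(ii) of the paper.) -/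
open MeasureTheory ProbabilityTheory Filter
open scoped ENNReal NNReal Topology

/-- The total variation distance `‖μ − ν‖_TV = sup_{A measurable} |μ(A) − ν(A)|`. -/
noncomputable def tvDist {E : Type*} [MeasurableSpace E] (μ ν : Measure E) : ℝ≥0∞ :=
  ⨆ (A : Set E) (_ : MeasurableSet A), (μ A - ν A) ⊔ (ν A - μ A)

set_option linter.unusedSectionVars false

namespace GEaux

/-! ### exponential helper -/

noncomputable def expR (a : ℝ) : ℝ≥0∞ := ENNReal.ofReal (Real.exp a)

lemma expR_ne_zero (a : ℝ) : expR a ≠ 0 := by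
  simp [expR, Real.exp_pos]

lemma expR_ne_top (a : ℝ) : expR a ≠ ⊤ := ENNReal.ofReal_ne_top

lemma expR_add (a b : ℝ) : expR (a + b) = expR a * expR b := by
  rw [expR, Real.exp_add, ENNReal.ofReal_mul (Real.exp_pos a).le]; rfl

lemma expR_inv (a : ℝ) : (expR a)⁻¹ = expR (-a) := by
  rw [expR, expR, Real.exp_neg, ENNReal.ofReal_inv_of_pos (Real.exp_pos a)]

lemma expR_mono {a b : ℝ} (h : a ≤ b) : expR a ≤ expR b :=
  ENNReal.ofReal_le_ofReal (Real.exp_le_exp.2 h)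

lemma expR_pow (a : ℝ) (n : ℕ) : expR a ^ n = expR (n * a) := by
  rw [expR, expR, ← ENNReal.ofReal_pow (Real.exp_pos a).le, ← Real.exp_nat_mul]

lemma one_le_expR {a : ℝ} (h : 0 ≤ a) : 1 ≤ expR a := by
  rw [expR]
  exact ENNReal.one_le_ofReal.2 (Real.one_le_exp h)

lemma expR_lt_one {a : ℝ} (h : a < 0) : expR a < 1 := by
  rw [expR]
  exact ENNReal.ofReal_lt_one.2 (Real.exp_lt_one_iff.2 h)

lemma log_expR (a : ℝ) : ENNReal.log (expR a) = (a : EReal) := by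
  have : expR a = EReal.exp (a : EReal) := by rw [EReal.exp_coe]; rfl
  rw [this, EReal.log_exp]

variable {E : Type*} [MeasurableSpace E]

section surv

variable (Q : Kernel (E × E) (E × E)) [IsMarkovKernel Q] (D : Set (E × E))

lemma surv_measurable (hDmeas : MeasurableSet D) (n : ℕ) : Measurable (surv Q D n) := by
  induction n with
  | zero => exact measurable_one.indicator hDmeas.compl
  | succ n ih =>
    have : Measurable (Function.uncurry fun (_ : E × E) w => surv Q D n w) :=
      ih.comp measurable_snd
    exact (Measurable.lintegral_kernel_prod_right this).indicator hDmeas.compl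

lemma surv_le_one (n : ℕ) (z : E × E) : surv Q D n z ≤ 1 := by
  cases n with
  | zero =>
    by_cases hz : z ∈ Dᶜ
    · simp [surv, Set.indicator_of_mem hz]
    · simp [surv, Set.indicator_of_notMem hz]
  | succ n =>
    by_cases hz : z ∈ Dᶜ
    · simp only [surv, Set.indicator_of_mem hz]
      calc ∫⁻ w, surv Q D n w ∂(Q z) ≤ ∫⁻ _, 1 ∂(Q z) :=
            lintegral_mono fun w => surv_le_one n w
        _ = 1 := by simp
    · simp [surv, Set.indicator_of_notMem hz]

omit [IsMarkovKernel Q] in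
lemma surv_of_not_mem {z : E × E} (hz : z ∉ D) (n : ℕ) :
    surv Q D (n + 1) z = ∫⁻ w, surv Q D n w ∂(Q z) := by
  simp [surv, Set.indicator_of_mem (Set.mem_compl hz)]

end surv

section kernels

variable (P : Kernel E E) [IsMarkovKernel P]

lemma iterK_succ' (n : ℕ) : iterK P (n + 1) = iterK P n ∘ₖ P := by
  induction n with
  | zero =>
    show P ∘ₖ Kernel.id = Kernel.id ∘ₖ P
    rw [Kernel.comp_id, Kernel.id_comp]
  | succ n ih =>
    show P ∘ₖ iterK P (n + 1) = (P ∘ₖ iterK P n) ∘ₖ P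
    rw [ih]
    show P ∘ₖ (iterK P n ∘ₖ P) = (P ∘ₖ iterK P n) ∘ₖ P
    rw [Kernel.comp_assoc]

lemma iterK_zero_apply (x : E) : iterK P 0 x = Measure.dirac x := by
  show Kernel.id x = _
  rw [Kernel.id_apply]

lemma iterK_succ_apply (n : ℕ) (x : E) : iterK P (n + 1) x = (iterK P n x).bind P := by
  show (P ∘ₖ iterK P n) x = _
  rw [Kernel.comp_apply]

instance iterK_markov (n : ℕ) : IsMarkovKernel (iterK P n) := by
  induction n with
  | zero => show IsMarkovKernel (Kernel.id : Kernel E E); infer_instance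
  | succ n ih => show IsMarkovKernel (P ∘ₖ iterK P n); infer_instance

variable (D : Set (E × E)) (Q : Kernel (E × E) (E × E)) [IsMarkovKernel Q]

lemma map_fst_eq (hmarg : ∀ p : E × E, p ∉ D → ∀ A : Set E, MeasurableSet A →
      Q p (A ×ˢ Set.univ) = P p.1 A ∧ Q p (Set.univ ×ˢ A) = P p.2 A)
    {z : E × E} (hz : z ∉ D) : (Q z).map Prod.fst = P z.1 := by
  refine Measure.ext fun A hA => ?_
  rw [Measure.map_apply measurable_fst hA, ← Set.prod_univ]
  exact (hmarg z hz A hA).1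

lemma map_snd_eq (hmarg : ∀ p : E × E, p ∉ D → ∀ A : Set E, MeasurableSet A →
      Q p (A ×ˢ Set.univ) = P p.1 A ∧ Q p (Set.univ ×ˢ A) = P p.2 A)
    {z : E × E} (hz : z ∉ D) : (Q z).map Prod.snd = P z.2 := by
  refine Measure.ext fun A hA => ?_
  rw [Measure.map_apply measurable_snd hA, ← Set.univ_prod]
  exact (hmarg z hz A hA).2

/-- The fundamental coupling inequality. -/
lemma coupling_le (hD : D = {p : E × E | p.1 = p.2}) (hDmeas : MeasurableSet D)
    (hmarg : ∀ p : E × E, p ∉ D → ∀ A : Set E, MeasurableSet A →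
      Q p (A ×ˢ Set.univ) = P p.1 A ∧ Q p (Set.univ ×ˢ A) = P p.2 A) :
    ∀ (n : ℕ) (z : E × E) (A : Set E), MeasurableSet A →
      iterK P n z.1 A ≤ iterK P n z.2 A + surv Q D n z ∧
      iterK P n z.2 A ≤ iterK P n z.1 A + surv Q D n z := by
  intro n
  induction n with
  | zero =>
    intro z A hA
    by_cases hz : z ∈ D
    · have : z.1 = z.2 := by rw [hD] at hz; exact hz
      rw [this]
      exact ⟨le_add_of_nonneg_right bot_le, le_add_of_nonneg_right bot_le⟩
    · have hs : surv Q D 0 z = 1 := by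
        simp [surv, Set.indicator_of_mem (Set.mem_compl hz)]
      rw [hs, iterK_zero_apply, iterK_zero_apply]
      constructor
      · exact le_add_left (by exact prob_le_one)
      · exact le_add_left (by exact prob_le_one)
  | succ n ih =>
    intro z A hA
    by_cases hz : z ∈ D
    · have : z.1 = z.2 := by rw [hD] at hz; exact hz
      rw [this]
      exact ⟨le_add_of_nonneg_right bot_le, le_add_of_nonneg_right bot_le⟩
    · have h1 : iterK P (n + 1) z.1 A = ∫⁻ w, iterK P n w.1 A ∂(Q z) := by
        rw [iterK_succ', Kernel.comp_apply' _ _ _ hA, ← map_fst_eq P D Q hmarg hz,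
          lintegral_map (Kernel.measurable_coe _ hA) measurable_fst]
      have h2 : iterK P (n + 1) z.2 A = ∫⁻ w, iterK P n w.2 A ∂(Q z) := by
        rw [iterK_succ', Kernel.comp_apply' _ _ _ hA, ← map_snd_eq P D Q hmarg hz,
          lintegral_map (Kernel.measurable_coe _ hA) measurable_snd]
      rw [h1, h2, surv_of_not_mem Q D hz]
      constructor
      · calc ∫⁻ w, iterK P n w.1 A ∂(Q z)
            ≤ ∫⁻ w, (iterK P n w.2 A + surv Q D n w) ∂(Q z) :=
              lintegral_mono fun w => (ih w A hA).1
          _ = (∫⁻ w, iterK P n w.2 A ∂(Q z)) + ∫⁻ w, surv Q D n w ∂(Q z) :=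
              lintegral_add_right _ (surv_measurable Q D hDmeas n)
      · calc ∫⁻ w, iterK P n w.2 A ∂(Q z)
            ≤ ∫⁻ w, (iterK P n w.1 A + surv Q D n w) ∂(Q z) :=
              lintegral_mono fun w => (ih w A hA).2
          _ = (∫⁻ w, iterK P n w.1 A ∂(Q z)) + ∫⁻ w, surv Q D n w ∂(Q z) :=
              lintegral_add_right _ (surv_measurable Q D hDmeas n)

end kernels

section main

variable (π : Measure E) [IsProbabilityMeasure π]
variable (P : Kernel E E) [IsMarkovKernel P]
variable (D : Set (E × E)) (Q : Kernel (E × E) (E × E)) [IsMarkovKernel Q]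

/-- `π` is invariant for every iterate. -/
lemma lintegral_iter_inv (hinv : π.bind (fun x => P x) = π) (n : ℕ) {A : Set E}
    (hA : MeasurableSet A) : ∫⁻ y, iterK P n y A ∂π = π A := by
  induction n with
  | zero =>
    have : ∀ y, iterK P 0 y A = A.indicator 1 y := fun y => by
      rw [iterK_zero_apply, Measure.dirac_apply' _ hA]
    simp_rw [this]
    rw [lintegral_indicator_one hA]
  | succ n ih =>
    have h1 : ∀ y : E, iterK P (n + 1) y A = ∫⁻ z, iterK P n z A ∂(P y) := fun y => by
      rw [iterK_succ', Kernel.comp_apply' _ _ _ hA]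
    simp_rw [h1]
    rw [← Measure.lintegral_bind P.measurable.aemeasurable (Kernel.measurable_coe _ hA).aemeasurable, hinv, ih]

/-- `hfun n x = ∫ surv n (x,y) dπ(y) = ℙ_{δ_x ⊗ π}[τ_c > n]`. -/
noncomputable def hfun (n : ℕ) (x : E) : ℝ≥0∞ := ∫⁻ y, surv Q D n (x, y) ∂π

lemma hfun_measurable (hDmeas : MeasurableSet D) (n : ℕ) : Measurable (hfun π D Q n) := by
  have : Measurable (Function.uncurry fun (x : E) (y : E) => surv Q D n (x, y)) :=
    surv_measurable Q D hDmeas n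
  exact Measurable.lintegral_prod_right this

lemma hfun_le_one (n : ℕ) (x : E) : hfun π D Q n x ≤ 1 := by
  calc hfun π D Q n x ≤ ∫⁻ _, 1 ∂π := lintegral_mono fun y => surv_le_one Q D n (x, y)
    _ = 1 := by simp

/-- The coupling / total-variation inequality. -/
lemma tv_le_hfun (hD : D = {p : E × E | p.1 = p.2}) (hDmeas : MeasurableSet D)
    (hinv : π.bind (fun x => P x) = π)
    (hmarg : ∀ p : E × E, p ∉ D → ∀ A : Set E, MeasurableSet A →
      Q p (A ×ˢ Set.univ) = P p.1 A ∧ Q p (Set.univ ×ˢ A) = P p.2 A)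
    (n : ℕ) (x : E) : tvDist (iterK P n x) π ≤ hfun π D Q n x := by
  refine iSup₂_le fun A hA => sup_le ?_ ?_
  · rw [tsub_le_iff_right]
    calc iterK P n x A = ∫⁻ _, iterK P n x A ∂π := by simp
      _ ≤ ∫⁻ y, (iterK P n y A + surv Q D n (x, y)) ∂π :=
          lintegral_mono fun y => (coupling_le P D Q hD hDmeas hmarg n (x, y) A hA).1
      _ = (∫⁻ y, iterK P n y A ∂π) + hfun π D Q n x :=
          lintegral_add_right _ ((surv_measurable Q D hDmeas n).comp measurable_prodMk_left)
      _ = π A + hfun π D Q n x := by rw [lintegral_iter_inv π P hinv n hA]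
      _ = hfun π D Q n x + π A := add_comm _ _
  · rw [tsub_le_iff_right]
    calc π A = ∫⁻ y, iterK P n y A ∂π := (lintegral_iter_inv π P hinv n hA).symm
      _ ≤ ∫⁻ y, (iterK P n x A + surv Q D n (x, y)) ∂π :=
          lintegral_mono fun y => (coupling_le P D Q hD hDmeas hmarg n (x, y) A hA).2
      _ = (∫⁻ _, iterK P n x A ∂π) + hfun π D Q n x :=
          lintegral_add_right _ ((surv_measurable Q D hDmeas n).comp measurable_prodMk_left)
      _ = hfun π D Q n x + iterK P n x A := by rw [add_comm]; simp

/-- Non-atomicity: every kernel measure `P y` gives zero mass to diagonal sections. -/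
lemma P_section_zero (hD : D = {p : E × E | p.1 = p.2}) (hDmeas : MeasurableSet D)
    (hnonatomic : ∀ p : E × E, ((P p.1).prod (P p.2)) D = 0) (y x : E) :
    P y (Prod.mk x ⁻¹' D) = 0 := by
  set s : Set E := Prod.mk x ⁻¹' D with hs
  have hsub : s ×ˢ s ⊆ D := by
    rintro ⟨a, b⟩ ⟨ha, hb⟩
    simp only [hs, hD, Set.mem_preimage, Set.mem_setOf_eq] at ha hb ⊢
    rw [← ha, ← hb]
  have : P y s * P y s = ((P y).prod (P y)) (s ×ˢ s) := (Measure.prod_prod s s).symm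
  have hzero : P y s * P y s = 0 :=
    le_antisymm (this ▸ le_trans (measure_mono hsub) (le_of_eq (hnonatomic (y, y)))) bot_le
  exact mul_self_eq_zero.mp hzero

lemma pi_section_zero (hD : D = {p : E × E | p.1 = p.2}) (hDmeas : MeasurableSet D)
    (hinv : π.bind (fun x => P x) = π)
    (hnonatomic : ∀ p : E × E, ((P p.1).prod (P p.2)) D = 0) (x : E) :
    π (Prod.mk x ⁻¹' D) = 0 := by
  have hsm : MeasurableSet (Prod.mk x ⁻¹' D) := measurable_prodMk_left hDmeas
  rw [← hinv, Measure.bind_apply hsm P.measurable.aemeasurable]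
  simp [P_section_zero P D hD hDmeas hnonatomic]

/-- One-step inequality: `β ∫ hfun k d(P x) ≤ hfun (k+1) x`. -/
lemma one_step (hD : D = {p : E × E | p.1 = p.2}) (hDmeas : MeasurableSet D)
    (hinv : π.bind (fun x => P x) = π)
    (hnonatomic : ∀ p : E × E, ((P p.1).prod (P p.2)) D = 0)
    (β : ℝ≥0∞) (hβ1 : β < 1)
    (hindep : ∀ p : E × E, p ∉ D → β • ((P p.1).prod (P p.2)) ≤ Q p)
    (k : ℕ) (x : E) :
    β * ∫⁻ z, hfun π D Q k z ∂(P x) ≤ hfun π D Q (k + 1) x := by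
  have hsurv := surv_measurable Q D hDmeas k
  -- joint measurability of `(z, y) ↦ ∫⁻ y', surv k (z, y') ∂(P y)`
  have hF : Measurable fun p : E × E => ∫⁻ y', surv Q D k (p.1, y') ∂(P p.2) := by
    have : Measurable (Function.uncurry fun (p : E × E) (b : E) => surv Q D k (p.1, b)) :=
      hsurv.comp ((measurable_fst.comp measurable_fst).prodMk measurable_snd)
    have h := Measurable.lintegral_kernel_prod_right
      (κ := P.comap Prod.snd measurable_snd) this
    simpa [Kernel.comap_apply] using h
  calc β * ∫⁻ z, hfun π D Q k z ∂(P x)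
      = ∫⁻ z, β * ∫⁻ y', surv Q D k (z, y') ∂π ∂(P x) := by
        rw [lintegral_const_mul' β _ (hβ1.trans_le le_top).ne]; rfl
    _ = ∫⁻ z, β * ∫⁻ y, ∫⁻ y', surv Q D k (z, y') ∂(P y) ∂π ∂(P x) := by
        congr 1; ext z; congr 1
        conv_lhs => rw [← hinv]
        exact Measure.lintegral_bind (μ := fun x => P x) (f := fun y' => surv Q D k (z, y'))
          P.measurable.aemeasurable (hsurv.comp measurable_prodMk_left).aemeasurable
    _ = β * ∫⁻ z, ∫⁻ y, ∫⁻ y', surv Q D k (z, y') ∂(P y) ∂π ∂(P x) := by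
        rw [lintegral_const_mul' β _ (hβ1.trans_le le_top).ne]
    _ = β * ∫⁻ y, ∫⁻ z, ∫⁻ y', surv Q D k (z, y') ∂(P y) ∂(P x) ∂π := by
        congr 1
        exact lintegral_lintegral_swap hF.aemeasurable
    _ = ∫⁻ y, β * ∫⁻ z, ∫⁻ y', surv Q D k (z, y') ∂(P y) ∂(P x) ∂π := by
        rw [lintegral_const_mul' β _ (hβ1.trans_le le_top).ne]
    _ = ∫⁻ y, β * ∫⁻ w, surv Q D k w ∂((P x).prod (P y)) ∂π := by
        congr 1; ext y; congr 1
        rw [MeasureTheory.lintegral_prod _ hsurv.aemeasurable]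
    _ ≤ ∫⁻ y, surv Q D (k + 1) (x, y) ∂π := by
        refine lintegral_mono_ae ?_
        have hae : ∀ᵐ y ∂π, (x, y) ∉ D := by
          have h0 : π (Prod.mk x ⁻¹' D) = 0 :=
            pi_section_zero π P D hD hDmeas hinv hnonatomic x
          exact (measure_eq_zero_iff_ae_notMem.1 h0)
        filter_upwards [hae] with y hy
        calc β * ∫⁻ w, surv Q D k w ∂((P x).prod (P y))
            = ∫⁻ w, surv Q D k w ∂(β • ((P x).prod (P y))) := by
              rw [lintegral_smul_measure, smul_eq_mul]
          _ ≤ ∫⁻ w, surv Q D k w ∂(Q (x, y)) := lintegral_mono' (hindep (x, y) hy) le_rfl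
          _ = surv Q D (k + 1) (x, y) := (surv_of_not_mem Q D hy k).symm
    _ = hfun π D Q (k + 1) x := rfl

/-- Iterated inequality: `β^m ∫ hfun k d(P^m x) ≤ hfun (k+m) x`. -/
lemma iter_step (hD : D = {p : E × E | p.1 = p.2}) (hDmeas : MeasurableSet D)
    (hinv : π.bind (fun x => P x) = π)
    (hnonatomic : ∀ p : E × E, ((P p.1).prod (P p.2)) D = 0)
    (β : ℝ≥0∞) (hβ1 : β < 1)
    (hindep : ∀ p : E × E, p ∉ D → β • ((P p.1).prod (P p.2)) ≤ Q p)
    (m : ℕ) : ∀ (k : ℕ) (x : E),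
    β ^ m * ∫⁻ z, hfun π D Q k z ∂(iterK P m x) ≤ hfun π D Q (k + m) x := by
  induction m with
  | zero =>
    intro k x
    rw [iterK_zero_apply, lintegral_dirac' x (hfun_measurable π D Q hDmeas k)]
    simp
  | succ m ih =>
    intro k x
    have hkm : k + (m + 1) = (k + 1) + m := by omega
    rw [hkm]
    calc β ^ (m + 1) * ∫⁻ z, hfun π D Q k z ∂(iterK P (m + 1) x)
        = β ^ m * (β * ∫⁻ z, hfun π D Q k z ∂((iterK P m x).bind P)) := by
          rw [iterK_succ_apply, pow_succ, mul_assoc]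
      _ = β ^ m * (β * ∫⁻ z, ∫⁻ w, hfun π D Q k w ∂(P z) ∂(iterK P m x)) := by
          rw [Measure.lintegral_bind (μ := fun x => P x) (f := hfun π D Q k)
            P.measurable.aemeasurable (hfun_measurable π D Q hDmeas k).aemeasurable]
      _ = β ^ m * ∫⁻ z, β * ∫⁻ w, hfun π D Q k w ∂(P z) ∂(iterK P m x) := by
          rw [lintegral_const_mul' β _ (hβ1.trans_le le_top).ne]
      _ ≤ β ^ m * ∫⁻ z, hfun π D Q (k + 1) z ∂(iterK P m x) := by
          refine mul_le_mul_right (lintegral_mono fun z => ?_) _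
          exact one_step π P D Q hD hDmeas hinv hnonatomic β hβ1 hindep k z
      _ ≤ hfun π D Q ((k + 1) + m) x := ih (k + 1) x

end main

end GEaux

/-- **Proposition 2.6 (ii)**: let `P` be ergodic with (unique) invariant probability `π` and
non-atomic, and let `Q` be a Markov coupling of `P` with absorbing diagonal and independent
components with parameter `β ∈ (0,1)`.  If `limsup (1/n) log ℙ_{δ_{x₀}⊗π}[τ_c > n] ≤ −r` for
some `x₀ ∈ E` and some `r > 0`, then for every `ε ∈ (0,r)`, for `π`-almost every `x` the
chain is geometrically ergodic with rate `r − ε`: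
`limsup (1/n) log ‖δ_x P^n − π‖_TV ≤ −(r − ε)` (logs valued in `EReal`, `log 0 = ⊥`). -/
theorem geometrically_ergodic_of_coupling_tail {E : Type*} [MeasurableSpace E]
    (π : Measure E) [IsProbabilityMeasure π]
    (P : Kernel E E) [IsMarkovKernel P]
    (D : Set (E × E)) (hD : D = {p : E × E | p.1 = p.2}) (hDmeas : MeasurableSet D)
    -- `π` is an invariant probability measure of `P` …
    (hinv : π.bind (fun x => P x) = π)
    -- … the unique one …
    (huniq : ∀ π' : Measure E, IsProbabilityMeasure π' → π'.bind (fun x => P x) = π' → π' = π)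
    -- … and `δ_x P^n (A) → π(A)` for every `x` and every measurable `A`
    (herg : ∀ x : E, ∀ A : Set E, MeasurableSet A →
      Tendsto (fun n => (iterK P n) x A) atTop (𝓝 (π A)))
    -- `P` is non-atomic
    (hnonatomic : ∀ p : E × E, ((P p.1).prod (P p.2)) D = 0)
    (Q : Kernel (E × E) (E × E)) [IsMarkovKernel Q]
    -- `Q` is a Markov coupling of `P`
    (hmarg : ∀ p : E × E, p ∉ D → ∀ A : Set E, MeasurableSet A →
      Q p (A ×ˢ Set.univ) = P p.1 A ∧ Q p (Set.univ ×ˢ A) = P p.2 A)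
    -- the diagonal is absorbing
    (habs : ∀ z ∈ D, Q z D = 1)
    -- independent components with parameter `β ∈ (0,1)`
    (β : ℝ≥0∞) (hβ0 : 0 < β) (hβ1 : β < 1)
    (hindep : ∀ p : E × E, p ∉ D → β • ((P p.1).prod (P p.2)) ≤ Q p)
    -- exponential tail of the coupling time with initial distribution `δ_{x₀} ⊗ π`
    (x₀ : E) (r : ℝ) (hr : 0 < r)
    (htail : Filter.limsup
        (fun n : ℕ => (((n : ℝ)⁻¹ : ℝ) : EReal) *
          ENNReal.log (∫⁻ p, surv Q D n p ∂((Measure.dirac x₀).prod π)))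
        Filter.atTop ≤ ((-r : ℝ) : EReal))
    (ε : ℝ) (hε0 : 0 < ε) (hεr : ε < r) :
    ∀ᵐ x ∂π, Filter.limsup
        (fun n : ℕ => (((n : ℝ)⁻¹ : ℝ) : EReal) *
          ENNReal.log (tvDist ((iterK P n) x) π))
        Filter.atTop ≤ ((-(r - ε) : ℝ) : EReal) := by
  classical
  set g := GEaux.hfun π D Q with hg
  have hgmeas : ∀ n, Measurable (g n) := fun n => GEaux.hfun_measurable π D Q hDmeas n
  -- rewrite the tail hypothesis through the product measure
  have hS : ∀ n : ℕ, (∫⁻ p, surv Q D n p ∂((Measure.dirac x₀).prod π)) = g n x₀ := by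
    intro n
    rw [MeasureTheory.lintegral_prod _ (GEaux.surv_measurable Q D hDmeas n).aemeasurable]
    exact lintegral_dirac' x₀ (hgmeas n)
  have htail' : Filter.limsup
      (fun n : ℕ => (((n : ℝ)⁻¹ : ℝ) : EReal) * ENNReal.log (g n x₀)) atTop
      ≤ ((-r : ℝ) : EReal) := by
    simpa only [hS] using htail
  set c := r - ε / 2 with hcdef
  have hc : 0 < c := by rw [hcdef]; linarith
  -- eventual bound from the limsup hypothesis
  have hev : ∀ᶠ n : ℕ in atTop,
      (((n : ℝ)⁻¹ : ℝ) : EReal) * ENNReal.log (g n x₀) < ((-c : ℝ) : EReal) := by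
    refine eventually_lt_of_limsup_lt (lt_of_le_of_lt htail' ?_)
    have : (-r : ℝ) < -c := by rw [hcdef]; linarith
    exact_mod_cast this
  obtain ⟨N₁, hN₁⟩ := eventually_atTop.1 hev
  set N : ℕ := max N₁ 1 with hN
  have hbase : ∀ n : ℕ, N ≤ n → g n x₀ ≤ GEaux.expR (-(c * n)) := by
    intro n hn
    have hn1 : (1 : ℕ) ≤ n := le_trans (le_max_right _ _) hn
    have hne : (n : ℝ) ≠ 0 := by
      exact_mod_cast Nat.one_le_iff_ne_zero.1 hn1
    have h1 := (hN₁ n (le_trans (le_max_left _ _) hn)).le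
    have hlog : ENNReal.log (g n x₀) ≤ ((-(c * n) : ℝ) : EReal) := by
      calc ENNReal.log (g n x₀)
          = ((n : ℝ) : EReal) * ((((n : ℝ)⁻¹ : ℝ) : EReal) * ENNReal.log (g n x₀)) := by
            rw [← mul_assoc, ← EReal.coe_mul, mul_inv_cancel₀ hne, EReal.coe_one, one_mul]
        _ ≤ ((n : ℝ) : EReal) * ((-c : ℝ) : EReal) :=
            mul_le_mul_of_nonneg_left h1 (by exact_mod_cast (n.cast_nonneg : (0 : ℝ) ≤ n))
        _ = ((-(c * n) : ℝ) : EReal) := by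
            rw [← EReal.coe_mul]; norm_cast; ring
    calc g n x₀ = EReal.exp (ENNReal.log (g n x₀)) := (ENNReal.exp_log _).symm
      _ ≤ EReal.exp ((-(c * n) : ℝ) : EReal) := EReal.exp_monotone hlog
      _ = GEaux.expR (-(c * n)) := by rw [EReal.exp_coe]; rfl
  set C0 := GEaux.expR (c * N) with hC0
  have hbound : ∀ n : ℕ, g n x₀ ≤ C0 * GEaux.expR (-(c * n)) := by
    intro n
    rcases le_or_gt N n with h | h
    · calc g n x₀ ≤ GEaux.expR (-(c * n)) := hbase n h
        _ ≤ C0 * GEaux.expR (-(c * n)) := by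
            refine le_mul_of_one_le_left bot_le ?_
            rw [hC0]
            exact GEaux.one_le_expR (by positivity)
    · calc g n x₀ ≤ 1 := GEaux.hfun_le_one π D Q n x₀
        _ ≤ C0 * GEaux.expR (-(c * n)) := by
            rw [hC0, ← GEaux.expR_add]
            refine GEaux.one_le_expR ?_
            have : (n : ℝ) ≤ (N : ℝ) := by exact_mod_cast h.le
            nlinarith
  -- the bad sets
  set As : ℕ → Set E := fun n => {x | GEaux.expR (-((r - ε) * n)) ≤ g n x} with hAs
  have hAsm : ∀ n, MeasurableSet (As n) := fun n =>
    measurableSet_le measurable_const (hgmeas n)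
  have hβm0 : ∀ m : ℕ, β ^ m ≠ 0 := fun m => pow_ne_zero m hβ0.ne'
  have hβmtop : ∀ m : ℕ, β ^ m ≠ ⊤ := fun m => ENNReal.pow_ne_top hβ1.ne_top
  have hμm : ∀ m : ℕ, iterK P m x₀ (limsup As atTop) = 0 := by
    intro m
    apply measure_limsup_atTop_eq_zero
    set K := (β ^ m)⁻¹ * (C0 * GEaux.expR (-(c * m))) with hK
    have hKtop : K ≠ ⊤ := by
      refine ENNReal.mul_ne_top (ENNReal.inv_ne_top.2 (hβm0 m)) ?_
      rw [hC0]
      exact ENNReal.mul_ne_top (GEaux.expR_ne_top _) (GEaux.expR_ne_top _)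
    have hterm : ∀ n : ℕ, iterK P m x₀ (As n) ≤ K * GEaux.expR (-(ε / 2)) ^ n := by
      intro n
      have hmarkov : GEaux.expR (-((r - ε) * n)) * iterK P m x₀ (As n)
          ≤ ∫⁻ z, g n z ∂(iterK P m x₀) :=
        mul_meas_ge_le_lintegral₀ (hgmeas n).aemeasurable _
      have hiter : β ^ m * ∫⁻ z, g n z ∂(iterK P m x₀) ≤ g (n + m) x₀ :=
        GEaux.iter_step π P D Q hD hDmeas hinv hnonatomic β hβ1 hindep m n x₀
      have hne0 : β ^ m * GEaux.expR (-((r - ε) * n)) ≠ 0 :=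
        mul_ne_zero (hβm0 m) (GEaux.expR_ne_zero _)
      have hnetop : β ^ m * GEaux.expR (-((r - ε) * n)) ≠ ⊤ :=
        ENNReal.mul_ne_top (hβmtop m) (GEaux.expR_ne_top _)
      have hcomb : (β ^ m * GEaux.expR (-((r - ε) * n))) * iterK P m x₀ (As n)
          ≤ g (n + m) x₀ := by
        calc (β ^ m * GEaux.expR (-((r - ε) * n))) * iterK P m x₀ (As n)
            = β ^ m * (GEaux.expR (-((r - ε) * n)) * iterK P m x₀ (As n)) := mul_assoc _ _ _
          _ ≤ β ^ m * ∫⁻ z, g n z ∂(iterK P m x₀) := mul_le_mul_right hmarkov _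
          _ ≤ g (n + m) x₀ := hiter
      have h3 : iterK P m x₀ (As n)
          ≤ (β ^ m * GEaux.expR (-((r - ε) * n)))⁻¹ * g (n + m) x₀ := by
        have h4 := mul_le_mul_right hcomb (β ^ m * GEaux.expR (-((r - ε) * n)))⁻¹
        rwa [← mul_assoc, ENNReal.inv_mul_cancel hne0 hnetop, one_mul] at h4
      have hexp_eq : GEaux.expR ((r - ε) * n) * (C0 * GEaux.expR (-(c * (n + m : ℕ))))
          = (C0 * GEaux.expR (-(c * m))) * GEaux.expR (-(ε / 2)) ^ n := by
        rw [hC0, GEaux.expR_pow]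
        simp only [← GEaux.expR_add]
        congr 1
        push_cast
        rw [hcdef]
        ring
      calc iterK P m x₀ (As n)
          ≤ (β ^ m * GEaux.expR (-((r - ε) * n)))⁻¹ * g (n + m) x₀ := h3
        _ = (β ^ m)⁻¹ * (GEaux.expR ((r - ε) * n) * g (n + m) x₀) := by
            rw [ENNReal.mul_inv (Or.inl (hβm0 m)) (Or.inl (hβmtop m)),
              GEaux.expR_inv, neg_neg, mul_assoc]
        _ ≤ (β ^ m)⁻¹ * (GEaux.expR ((r - ε) * n) * (C0 * GEaux.expR (-(c * (n + m : ℕ))))) :=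
            mul_le_mul_right (mul_le_mul_right (hbound (n + m)) _) _
        _ = K * GEaux.expR (-(ε / 2)) ^ n := by
            rw [hK, hexp_eq]; ring
    have hsum : (∑' n, iterK P m x₀ (As n)) ≤ K * ∑' n : ℕ, GEaux.expR (-(ε / 2)) ^ n := by
      rw [← ENNReal.tsum_mul_left]
      exact ENNReal.tsum_le_tsum hterm
    refine (lt_of_le_of_lt hsum ?_).ne
    rw [ENNReal.tsum_geometric]
    refine ENNReal.mul_lt_top hKtop.lt_top ?_
    rw [ENNReal.inv_lt_top, tsub_pos_iff_lt]
    exact GEaux.expR_lt_one (by linarith)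
  have hBmeas : MeasurableSet (limsup As atTop) := MeasurableSet.measurableSet_limsup hAsm
  have hπB : π (limsup As atTop) = 0 := by
    have h1 := herg x₀ _ hBmeas
    have h0 : Tendsto (fun m => iterK P m x₀ (limsup As atTop)) atTop (𝓝 0) := by
      simp_rw [hμm]; exact tendsto_const_nhds
    exact tendsto_nhds_unique h1 h0
  filter_upwards [measure_eq_zero_iff_ae_notMem.1 hπB] with x hx
  have hev2 : ∀ᶠ n in atTop, x ∉ As n :=
    Filter.not_frequently.1 fun h => hx (Filter.mem_limsup_iff_frequently_mem.2 h)
  refine Filter.limsup_le_of_le (by isBoundedDefault) ?_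
  filter_upwards [hev2, eventually_ge_atTop 1] with n hn hn1
  have hlt : g n x < GEaux.expR (-((r - ε) * n)) := lt_of_not_ge (by simpa [hAs] using hn)
  have htv : tvDist (iterK P n x) π ≤ g n x :=
    GEaux.tv_le_hfun π P D Q hD hDmeas hinv hmarg n x
  have hlog : ENNReal.log (tvDist (iterK P n x) π) ≤ ((-((r - ε) * n) : ℝ) : EReal) := by
    calc ENNReal.log (tvDist (iterK P n x) π)
        ≤ ENNReal.log (GEaux.expR (-((r - ε) * n))) :=
          ENNReal.log_monotone (le_of_lt (lt_of_le_of_lt htv hlt))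
      _ = ((-((r - ε) * n) : ℝ) : EReal) := GEaux.log_expR _
  have hne : (n : ℝ) ≠ 0 := by exact_mod_cast Nat.one_le_iff_ne_zero.1 hn1
  calc (((n : ℝ)⁻¹ : ℝ) : EReal) * ENNReal.log (tvDist (iterK P n x) π)
      ≤ (((n : ℝ)⁻¹ : ℝ) : EReal) * ((-((r - ε) * n) : ℝ) : EReal) :=
        mul_le_mul_of_nonneg_left hlog
          (by exact_mod_cast (inv_nonneg.2 n.cast_nonneg : (0 : ℝ) ≤ (n : ℝ)⁻¹))
    _ = ((-(r - ε) : ℝ) : EReal) := by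
        rw [← EReal.coe_mul]
        norm_cast
        field_simp
end
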